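/- arXiv:cs/0502078 — 8 statements merged into one kernel-verified Lean document; each statement's English description precedes it below -/
import Mathlib

section
/- Two disjunctive logic programs P and Q are uniformly equivalent if and only if for every SE-model (X,Y) that is an SE-model of exactly one of P and Q, it holds that (i) Y is a classical model of both P and Q, and (ii) there exists a set X' with X ⊂ X' ⊂ Y such that (X',Y) is an SE-model of the other program. -/
structure Rule where
  head : Finset ℕ
  pos : Finset ℕ
  neg : Finset ℕ

abbrev Interp := Set ℕ
abbrev Program := Set Rule

/-- Classical satisfaction of a rule by an interpretation. -/
def Rule.satisfied (I : Interp) (r : Rule) : Prop :=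
  ((↑r.pos ⊆ I) ∧ ∀ a ∈ r.neg, a ∉ I) → ∃ a ∈ r.head, a ∈ I

/-- `I` is a classical model of the program `P`. -/
def Models (I : Interp) (P : Program) : Prop := ∀ r ∈ P, Rule.satisfied I r

/-- `X` models the Gelfond-Lifschitz reduct `P^Y`. -/
def ModelsReduct (X : Interp) (P : Program) (Y : Interp) : Prop :=
  ∀ r ∈ P, (∀ a ∈ r.neg, a ∉ Y) → (↑r.pos ⊆ X) → ∃ a ∈ r.head, a ∈ X

/-- `Y` is an answer set of `P`: a minimal model of the reduct `P^Y`. -/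
def AnswerSet (P : Program) (Y : Interp) : Prop :=
  ModelsReduct Y P Y ∧ ∀ Z : Interp, Z ⊂ Y → ¬ ModelsReduct Z P Y

/-- `(X,Y)` is an SE-model of `P`. -/
def SEModel (P : Program) (X Y : Interp) : Prop :=
  X ⊆ Y ∧ Models Y P ∧ ModelsReduct X P Y

/-- `(X,Y)` is a UE-model of `P`. -/
def UEModel (P : Program) (X Y : Interp) : Prop :=
  SEModel P X Y ∧ ∀ X', SEModel P X' Y → X ⊂ X' → X' = Y

/-- The program consisting of the atoms in `F` as facts. -/
def Facts (F : Set ℕ) : Program := { r | ∃ a ∈ F, r = ⟨{a}, ∅, ∅⟩ }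

/-- Uniform equivalence of programs. -/
def UnifEquiv (P Q : Program) : Prop :=
  ∀ F : Set ℕ, ∀ Y : Interp, AnswerSet (P ∪ Facts F) Y ↔ AnswerSet (Q ∪ Facts F) Y

/-- Strong equivalence of programs. -/
def StrongEquiv (P Q : Program) : Prop :=
  ∀ R : Program, ∀ Y : Interp, AnswerSet (P ∪ R) Y ↔ AnswerSet (Q ∪ R) Y

def Rule.atoms (r : Rule) : Finset ℕ := r.head ∪ r.pos ∪ r.neg

/-- All atoms occurring in `R` belong to `A`. -/
def ProgramOver (A : Set ℕ) (R : Program) : Prop := ∀ r ∈ R, ↑r.atoms ⊆ A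

/-- Strong equivalence relative to a set of atoms `A`. -/
def RelStrongEquiv (A : Set ℕ) (P Q : Program) : Prop :=
  ∀ R : Program, ProgramOver A R →
    ∀ Y : Interp, AnswerSet (P ∪ R) Y ↔ AnswerSet (Q ∪ R) Y

/-- Uniform equivalence relative to a set of atoms `A`. -/
def RelUnifEquiv (A : Set ℕ) (P Q : Program) : Prop :=
  ∀ F : Set ℕ, F ⊆ A →
    ∀ Y : Interp, AnswerSet (P ∪ Facts F) Y ↔ AnswerSet (Q ∪ Facts F) Y

/-- A unary rule: one head atom, no negation, at most one positive body atom. -/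
def Unary (r : Rule) : Prop := r.head.card = 1 ∧ r.neg = ∅ ∧ r.pos.card ≤ 1

/-- `(X,Y)` is a (relativized) `A`-SE-model of `P`. -/
def ASEModel (A : Set ℕ) (P : Program) (X Y : Interp) : Prop :=
  (X = Y ∨ X ⊂ Y ∩ A) ∧ Models Y P ∧
  (∀ Y' : Interp, Y' ⊂ Y → Y' ∩ A = Y ∩ A → ¬ ModelsReduct Y' P Y) ∧
  (X ⊂ Y → ∃ X' : Interp, X' ⊆ Y ∧ X' ∩ A = X ∧ ModelsReduct X' P Y)

/-- `(X,Y)` is a (relativized) `A`-UE-model of `P`. -/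
def AUEModel (A : Set ℕ) (P : Program) (X Y : Interp) : Prop :=
  ASEModel A P X Y ∧ ∀ X', ASEModel A P X' Y → X ⊂ X' → X' = Y

/-- A positive program: all rules have empty negative body. -/
def Positive (P : Program) : Prop := ∀ r ∈ P, r.neg = ∅

/-- Positive dependency: edge from a positive body atom to a head atom. -/
def Dep (P : Program) (a b : ℕ) : Prop := ∃ r ∈ P, a ∈ r.pos ∧ b ∈ r.head

/-- Head-cycle freeness: no directed cycle of the positive dependency graph
through two distinct head atoms of one rule. -/
def HCF (P : Program) : Prop :=
  ∀ r ∈ P, ∀ a ∈ r.head, ∀ b ∈ r.head, a ≠ b →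
    ¬ (Relation.ReflTransGen (Dep P) a b ∧ Relation.ReflTransGen (Dep P) b a)

/-- The shift of a single rule. -/
def Rule.shift (r : Rule) : Program :=
  if r.head = ∅ then {r}
  else { r' | ∃ a ∈ r.head, r' = ⟨{a}, r.pos, r.neg ∪ (r.head.erase a)⟩ }

/-- The shift of a program. -/
def shiftProg (P : Program) : Program := ⋃ r ∈ P, r.shift

/-- The set of SE-models of `P` as a set of pairs. -/
def SEset (P : Program) : Set (Interp × Interp) := { p | SEModel P p.1 p.2 }


lemma models_iff_reduct (Y : Interp) (P : Program) :
    Models Y P ↔ ModelsReduct Y P Y := by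
  constructor
  · intro h r hr hneg hpos
    exact h r hr ⟨hpos, hneg⟩
  · intro h r hr hb
    exact h r hr hb.2 hb.1

lemma reduct_union_facts (X Y : Interp) (P : Program) (F : Set ℕ) :
    ModelsReduct X (P ∪ Facts F) Y ↔ ModelsReduct X P Y ∧ F ⊆ X := by
  constructor
  · intro h
    refine ⟨fun r hr => h r (Or.inl hr), fun a ha => ?_⟩
    have := h ⟨{a}, ∅, ∅⟩ (Or.inr ⟨a, ha, rfl⟩) (by simp) (by simp)
    simpa using this
  · rintro ⟨hP, hF⟩ r hr hneg hpos
    rcases hr with hr | ⟨a, ha, rfl⟩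
    · exact hP r hr hneg hpos
    · exact ⟨a, by simp, hF ha⟩

lemma unifEquiv_symm {P Q : Program} (h : UnifEquiv P Q) : UnifEquiv Q P :=
  fun F Y => (h F Y).symm

lemma forward_aux {P Q : Program} (h : UnifEquiv P Q) (X Y : Interp)
    (hP : SEModel P X Y) (hQ : ¬ SEModel Q X Y) :
    Models Y Q ∧ ∃ X', X ⊂ X' ∧ X' ⊂ Y ∧ SEModel Q X' Y := by
  obtain ⟨hXY, hYP, hXred⟩ := hP
  -- Y is an answer set of P ∪ Facts Y
  have hAS : AnswerSet (P ∪ Facts Y) Y := by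
    refine ⟨(reduct_union_facts Y Y P Y).2 ⟨(models_iff_reduct Y P).1 hYP, subset_rfl⟩, ?_⟩
    intro Z hZ hZr
    have := ((reduct_union_facts Z Y P Y).1 hZr).2
    exact hZ.not_subset this
  have hASQ : AnswerSet (Q ∪ Facts Y) Y := (h Y Y).1 hAS
  have hYQred : ModelsReduct Y Q Y := ((reduct_union_facts Y Y Q Y).1 hASQ.1).1
  have hYQ : Models Y Q := (models_iff_reduct Y Q).2 hYQred
  refine ⟨hYQ, ?_⟩
  -- X ⊂ Y
  have hXneY : X ≠ Y := by
    rintro rfl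
    exact hQ ⟨subset_rfl, hYQ, hYQred⟩
  have hXssY : X ⊂ Y := ⟨hXY, fun hsub => hXneY (Set.Subset.antisymm hXY hsub)⟩
  -- Y is not an answer set of P ∪ Facts X
  have hnAS : ¬ AnswerSet (P ∪ Facts X) Y := by
    intro hAS'
    exact hAS'.2 X hXssY ((reduct_union_facts X Y P X).2 ⟨hXred, subset_rfl⟩)
  have hnASQ : ¬ AnswerSet (Q ∪ Facts X) Y := fun hc => hnAS ((h X Y).2 hc)
  have hmodels : ModelsReduct Y (Q ∪ Facts X) Y :=
    (reduct_union_facts Y Y Q X).2 ⟨hYQred, hXY⟩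
  simp only [AnswerSet, not_and, not_forall, not_not] at hnASQ
  obtain ⟨Z, hZY, hZred⟩ := hnASQ hmodels
  obtain ⟨hZQred, hXZ⟩ := (reduct_union_facts Z Y Q X).1 hZred
  have hSEZ : SEModel Q Z Y := ⟨hZY.subset, hYQ, hZQred⟩
  have hXneZ : X ≠ Z := by
    rintro rfl
    exact hQ hSEZ
  exact ⟨Z, ⟨hXZ, fun hsub => hXneZ (Set.Subset.antisymm hXZ hsub)⟩, hZY, hSEZ⟩

lemma backward_aux {P Q : Program}
    (h : ∀ X Y : Interp, Xor' (SEModel P X Y) (SEModel Q X Y) →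
        (Models Y P ∧ Models Y Q) ∧
        (SEModel P X Y → ∃ X' : Interp, X ⊂ X' ∧ X' ⊂ Y ∧ SEModel Q X' Y) ∧
        (SEModel Q X Y → ∃ X' : Interp, X ⊂ X' ∧ X' ⊂ Y ∧ SEModel P X' Y))
    (F : Set ℕ) (Y : Interp) (hAS : AnswerSet (P ∪ Facts F) Y) :
    AnswerSet (Q ∪ Facts F) Y := by
  obtain ⟨hYred, minP⟩ := hAS
  obtain ⟨hYPred, hFY⟩ := (reduct_union_facts Y Y P F).1 hYred
  have hYP : Models Y P := (models_iff_reduct Y P).2 hYPred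
  -- Y models Q
  have hYQ : Models Y Q := by
    by_cases hq : SEModel Q Y Y
    · exact hq.2.1
    · have hxor : Xor' (SEModel P Y Y) (SEModel Q Y Y) :=
        Or.inl ⟨⟨subset_rfl, hYP, hYPred⟩, hq⟩
      exact ((h Y Y hxor).1).2
  have hYQred : ModelsReduct Y Q Y := (models_iff_reduct Y Q).1 hYQ
  refine ⟨(reduct_union_facts Y Y Q F).2 ⟨hYQred, hFY⟩, ?_⟩
  intro Z hZY hZred
  obtain ⟨hZQred, hFZ⟩ := (reduct_union_facts Z Y Q F).1 hZred
  by_cases hp : ModelsReduct Z P Y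
  · exact minP Z hZY ((reduct_union_facts Z Y P F).2 ⟨hp, hFZ⟩)
  · have hSEQ : SEModel Q Z Y := ⟨hZY.subset, hYQ, hZQred⟩
    have hnSEP : ¬ SEModel P Z Y := fun hc => hp hc.2.2
    have hxor : Xor' (SEModel P Z Y) (SEModel Q Z Y) := Or.inr ⟨hSEQ, hnSEP⟩
    obtain ⟨X', hZX', hX'Y, hSEP'⟩ := (h Z Y hxor).2.2 hSEQ
    exact minP X' hX'Y
      ((reduct_union_facts X' Y P F).2 ⟨hSEP'.2.2, hFZ.trans hZX'.subset⟩)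

theorem stmt0 (P Q : Program) :
    UnifEquiv P Q ↔
      ∀ X Y : Interp, Xor' (SEModel P X Y) (SEModel Q X Y) →
        (Models Y P ∧ Models Y Q) ∧
        (SEModel P X Y → ∃ X' : Interp, X ⊂ X' ∧ X' ⊂ Y ∧ SEModel Q X' Y) ∧
        (SEModel Q X Y → ∃ X' : Interp, X ⊂ X' ∧ X' ⊂ Y ∧ SEModel P X' Y) := by
  constructor
  · intro h X Y hxor
    rcases hxor with ⟨hp, hq⟩ | ⟨hq, hp⟩
    · obtain ⟨hYQ, hex⟩ := forward_aux h X Y hp hq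
      exact ⟨⟨hp.2.1, hYQ⟩, fun _ => hex, fun hc => absurd hc hq⟩
    · obtain ⟨hYP, hex⟩ := forward_aux (unifEquiv_symm h) X Y hq hp
      exact ⟨⟨hYP, hq.2.1⟩, fun hc => absurd hc hp, fun _ => hex⟩
  · intro h F Y
    constructor
    · exact backward_aux h F Y
    · refine backward_aux (fun X Y hxor => ?_) F Y
      have hxor' : Xor' (SEModel P X Y) (SEModel Q X Y) := by
        rcases hxor with ⟨a, b⟩ | ⟨a, b⟩
        · exact Or.inr ⟨a, b⟩
        · exact Or.inl ⟨a, b⟩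
      obtain ⟨⟨h1, h2⟩, h3, h4⟩ := h X Y hxor'
      exact ⟨⟨h2, h1⟩, h4, h3⟩
end

section
/- Let P and Q be disjunctive logic programs such that at least one of them is finite. Then P and Q are uniformly equivalent iff (i) for every X, (X,X) is an SE-model of P iff it is an SE-model of Q, and (ii) for every SE-model (X,Y) of P or Q with X ⊂ Y, there exists an SE-model (X',Y) of both P and Q with X ⊆ X' ⊂ Y. -/
/-! ### Auxiliary lemmas -/

lemma modelsReduct_self_iff (R : Program) (Y : Interp) :
    ModelsReduct Y R Y ↔ Models Y R := by
  constructor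
  · intro h r hr hc
    exact h r hr hc.2 hc.1
  · intro h r hr hn hp
    exact h r hr ⟨hp, hn⟩

lemma models_union_facts {P : Program} {F : Set ℕ} {Y : Interp} :
    Models Y (P ∪ Facts F) ↔ Models Y P ∧ F ⊆ Y := by
  constructor
  · intro h
    refine ⟨fun r hr => h r (Or.inl hr), fun a ha => ?_⟩
    have := h ⟨{a}, ∅, ∅⟩ (Or.inr ⟨a, ha, rfl⟩)
    unfold Rule.satisfied at this
    simpa using this
  · rintro ⟨hP, hF⟩ r hr
    rcases hr with hr | ⟨a, ha, rfl⟩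
    · exact hP r hr
    · intro _
      exact ⟨a, Finset.mem_singleton_self a, hF ha⟩

lemma modelsReduct_union_facts {P : Program} {F : Set ℕ} {Z Y : Interp} :
    ModelsReduct Z (P ∪ Facts F) Y ↔ ModelsReduct Z P Y ∧ F ⊆ Z := by
  constructor
  · intro h
    refine ⟨fun r hr => h r (Or.inl hr), fun a ha => ?_⟩
    have := h ⟨{a}, ∅, ∅⟩ (Or.inr ⟨a, ha, rfl⟩) (by simp) (by simp)
    simpa using this
  · rintro ⟨hP, hF⟩ r hr
    rcases hr with hr | ⟨a, ha, rfl⟩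
    · exact hP r hr
    · intro _ _
      exact ⟨a, Finset.mem_singleton_self a, hF ha⟩

lemma answerSet_union_facts {P : Program} {F : Set ℕ} {Y : Interp} :
    AnswerSet (P ∪ Facts F) Y ↔
      Models Y P ∧ F ⊆ Y ∧ ∀ Z : Interp, Z ⊂ Y → F ⊆ Z → ¬ ModelsReduct Z P Y := by
  constructor
  · rintro ⟨hm, hmin⟩
    have h1 := models_union_facts.1 ((modelsReduct_self_iff _ _).1 hm)
    exact ⟨h1.1, h1.2, fun Z hZ hFZ hZr => hmin Z hZ (modelsReduct_union_facts.2 ⟨hZr, hFZ⟩)⟩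
  · rintro ⟨h1, h2, h3⟩
    refine ⟨(modelsReduct_self_iff _ _).2 (models_union_facts.2 ⟨h1, h2⟩), fun Z hZ hc => ?_⟩
    have hc' := modelsReduct_union_facts.1 hc
    exact h3 Z hZ hc'.2 hc'.1

lemma models_other {P Q : Program} (h : UnifEquiv P Q) {Y : Interp}
    (hY : Models Y P) : Models Y Q := by
  have hAS : AnswerSet (P ∪ Facts Y) Y := by
    rw [answerSet_union_facts]
    exact ⟨hY, subset_rfl, fun Z hZ hYZ _ => hZ.not_subset hYZ⟩
  have := (h Y Y).1 hAS
  exact (answerSet_union_facts.1 this).1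

/-- Step lemma: from a reduct-model of `P` strictly below `Y`, obtain one of `Q`. -/
lemma ue_step {P Q : Program} (h : UnifEquiv P Q) {Y W : Interp}
    (hYQ : Models Y Q) (hWY : W ⊂ Y) (hW : ModelsReduct W P Y) :
    ∃ Z, W ⊆ Z ∧ Z ⊂ Y ∧ ModelsReduct Z Q Y := by
  have hnot : ¬ AnswerSet (P ∪ Facts W) Y := by
    rw [answerSet_union_facts]
    rintro ⟨-, -, hmin⟩
    exact hmin W hWY subset_rfl hW
  have hnot' : ¬ AnswerSet (Q ∪ Facts W) Y := fun hc => hnot ((h W Y).2 hc)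
  rw [answerSet_union_facts] at hnot'
  push_neg at hnot'
  obtain ⟨Z, hZY, hWZ, hZ⟩ := hnot' hYQ hWY.subset
  exact ⟨Z, hWZ, hZY, hZ⟩

lemma trace_reduct {P : Program} {A : Set ℕ} (hA : ∀ r ∈ P, ↑r.atoms ⊆ A)
    {Z Z' Y : Interp} (hZZ' : Z ∩ A = Z' ∩ A) (hZ : ModelsReduct Z P Y) :
    ModelsReduct Z' P Y := by
  intro r hr hn hp
  have hat := hA r hr
  have hpos : ↑r.pos ⊆ Z := by
    intro a ha
    have haA : a ∈ A := hat (by simp [Rule.atoms, ha])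
    have : a ∈ Z' ∩ A := ⟨hp ha, haA⟩
    rw [← hZZ'] at this
    exact this.1
  obtain ⟨b, hb, hbZ⟩ := hZ r hr hn hpos
  have hbA : b ∈ A := hat (by simp [Rule.atoms, hb])
  have : b ∈ Z ∩ A := ⟨hbZ, hbA⟩
  rw [hZZ'] at this
  exact ⟨b, hb, this.1⟩

/-- Main lemma for the forward direction, assuming `P` finite. -/
lemma main_step {P Q : Program} (h : UnifEquiv P Q) (hPfin : P.Finite) {X Y : Interp}
    (hXY : X ⊂ Y) (hYP : Models Y P) (hYQ : Models Y Q)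
    (hX : ModelsReduct X P Y ∨ ModelsReduct X Q Y) :
    ∃ X', X ⊆ X' ∧ X' ⊂ Y ∧ ModelsReduct X' P Y ∧ ModelsReduct X' Q Y := by
  classical
  set A : Set ℕ := ⋃ r ∈ P, (↑r.atoms : Set ℕ) with hAdef
  have hAfin : A.Finite := Set.Finite.biUnion hPfin (fun r _ => r.atoms.finite_toSet)
  have hA : ∀ r ∈ P, ↑r.atoms ⊆ A := fun r hr a ha => Set.mem_biUnion hr ha
  have h' : UnifEquiv Q P := unifEquiv_symm h
  -- combined step
  have comb : ∀ Z : Interp, Z ⊂ Y → ModelsReduct Z Q Y →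
      ∃ Z', Z ⊆ Z' ∧ Z' ⊂ Y ∧ ModelsReduct Z' Q Y ∧
        (Z ∩ A = Z' ∩ A → ModelsReduct Z P Y) := by
    intro Z hZY hZ
    obtain ⟨W, hZW, hWY, hW⟩ := ue_step h' hYP hZY hZ
    obtain ⟨Z', hWZ', hZ'Y, hZ'⟩ := ue_step h hYQ hWY hW
    refine ⟨Z', hZW.trans hWZ', hZ'Y, hZ', fun heq => ?_⟩
    have hZW' : Z ∩ A = W ∩ A := by
      apply Set.Subset.antisymm
      · exact Set.inter_subset_inter_left A hZW
      · calc W ∩ A ⊆ Z' ∩ A := Set.inter_subset_inter_left A hWZ'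
          _ = Z ∩ A := heq.symm
    exact trace_reduct hA hZW'.symm hW
  -- initial element
  obtain ⟨Z₀, hXZ₀, hZ₀Y, hZ₀⟩ : ∃ Z₀, X ⊆ Z₀ ∧ Z₀ ⊂ Y ∧ ModelsReduct Z₀ Q Y := by
    rcases hX with hXp | hXq
    · obtain ⟨Z, hXZ, hZY, hZ⟩ := ue_step h hYQ hXY hXp
      exact ⟨Z, hXZ, hZY, hZ⟩
    · exact ⟨X, subset_rfl, hXY, hXq⟩
  -- turn the step into a total function
  have st : ∀ Z : Interp, ∃ Z', (Z ⊂ Y ∧ ModelsReduct Z Q Y) →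
      (Z ⊆ Z' ∧ Z' ⊂ Y ∧ ModelsReduct Z' Q Y ∧
        (Z ∩ A = Z' ∩ A → ModelsReduct Z P Y)) := by
    intro Z
    by_cases hc : Z ⊂ Y ∧ ModelsReduct Z Q Y
    · obtain ⟨Z', h1, h2, h3, h4⟩ := comb Z hc.1 hc.2
      exact ⟨Z', fun _ => ⟨h1, h2, h3, h4⟩⟩
    · exact ⟨Z, fun hc' => absurd hc' hc⟩
  choose f hf using st
  -- chain
  have inv : ∀ n : ℕ, X ⊆ f^[n] Z₀ ∧ f^[n] Z₀ ⊂ Y ∧ ModelsReduct (f^[n] Z₀) Q Y := by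
    intro n
    induction n with
    | zero => exact ⟨hXZ₀, hZ₀Y, hZ₀⟩
    | succ n ih =>
      rw [Function.iterate_succ_apply']
      obtain ⟨h1, h2, h3⟩ := ih
      obtain ⟨a, b, c, -⟩ := hf _ ⟨h2, h3⟩
      exact ⟨h1.trans a, b, c⟩
  have mono : ∀ n : ℕ, f^[n] Z₀ ⊆ f^[n+1] Z₀ := by
    intro n
    rw [Function.iterate_succ_apply']
    obtain ⟨-, h2, h3⟩ := inv n
    exact (hf _ ⟨h2, h3⟩).1
  -- stabilization of traces
  have stab : ∃ n : ℕ, f^[n] Z₀ ∩ A = f^[n+1] Z₀ ∩ A := by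
    by_contra hcon
    push_neg at hcon
    have hT : ∀ n : ℕ, (f^[n] Z₀ ∩ A).Finite :=
      fun n => hAfin.subset Set.inter_subset_right
    have hstep : ∀ n : ℕ, (f^[n] Z₀ ∩ A).ncard < (f^[n+1] Z₀ ∩ A).ncard := by
      intro n
      apply Set.ncard_lt_ncard _ (hT (n+1))
      exact HasSubset.Subset.ssubset_of_ne
        (Set.inter_subset_inter_left A (mono n)) (hcon n)
    have hge : ∀ n : ℕ, n ≤ (f^[n] Z₀ ∩ A).ncard := by
      intro n
      induction n with
      | zero => exact Nat.zero_le _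
      | succ n ih => exact Nat.lt_of_le_of_lt ih (hstep n)
    have hle : (f^[A.ncard+1] Z₀ ∩ A).ncard ≤ A.ncard :=
      Set.ncard_le_ncard Set.inter_subset_right hAfin
    have := hge (A.ncard + 1)
    omega
  obtain ⟨n, hn⟩ := stab
  obtain ⟨h1, h2, h3⟩ := inv n
  obtain ⟨-, -, -, d⟩ := hf _ ⟨h2, h3⟩
  rw [← Function.iterate_succ_apply' f n Z₀] at d
  exact ⟨f^[n] Z₀, h1, h2, d hn, h3⟩

lemma se_self_iff {P : Program} {X : Interp} : SEModel P X X ↔ Models X P := by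
  constructor
  · rintro ⟨-, hm, -⟩
    exact hm
  · intro hm
    exact ⟨subset_rfl, hm, (modelsReduct_self_iff _ _).2 hm⟩

/-- One direction of the backward implication. -/
lemma back_dir {P Q : Program}
    (h1 : ∀ X : Interp, SEModel P X X ↔ SEModel Q X X)
    (h2 : ∀ X Y : Interp, X ⊂ Y → (SEModel P X Y ∨ SEModel Q X Y) →
      ∃ X' : Interp, X ⊆ X' ∧ X' ⊂ Y ∧ SEModel P X' Y ∧ SEModel Q X' Y)
    {F : Set ℕ} {Y : Interp} (hAS : AnswerSet (P ∪ Facts F) Y) :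
    AnswerSet (Q ∪ Facts F) Y := by
  rw [answerSet_union_facts] at hAS ⊢
  obtain ⟨hYP, hFY, hmin⟩ := hAS
  have hYQ : Models Y Q := se_self_iff.1 ((h1 Y).1 (se_self_iff.2 hYP))
  refine ⟨hYQ, hFY, fun Z hZY hFZ hZ => ?_⟩
  obtain ⟨X', hZX', hX'Y, hP', -⟩ := h2 Z Y hZY (Or.inr ⟨hZY.subset, hYQ, hZ⟩)
  exact hmin X' hX'Y (hFZ.trans hZX') hP'.2.2

theorem stmt2 (P Q : Program) (hfin : P.Finite ∨ Q.Finite) :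
    UnifEquiv P Q ↔
      ((∀ X : Interp, SEModel P X X ↔ SEModel Q X X) ∧
       (∀ X Y : Interp, X ⊂ Y → (SEModel P X Y ∨ SEModel Q X Y) →
          ∃ X' : Interp, X ⊆ X' ∧ X' ⊂ Y ∧ SEModel P X' Y ∧ SEModel Q X' Y)) := by
  constructor
  · intro h
    have h' : UnifEquiv Q P := unifEquiv_symm h
    constructor
    · intro X
      constructor
      · intro hs
        exact se_self_iff.2 (models_other h (se_self_iff.1 hs))
      · intro hs
        exact se_self_iff.2 (models_other h' (se_self_iff.1 hs))
    · intro X Y hXY hor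
      have hYPQ : Models Y P ∧ Models Y Q := by
        rcases hor with hs | hs
        · exact ⟨hs.2.1, models_other h hs.2.1⟩
        · exact ⟨models_other h' hs.2.1, hs.2.1⟩
      obtain ⟨hYP, hYQ⟩ := hYPQ
      have hX : ModelsReduct X P Y ∨ ModelsReduct X Q Y := hor.imp (·.2.2) (·.2.2)
      rcases hfin with hPfin | hQfin
      · obtain ⟨X', ha, hb, hc, hd⟩ := main_step h hPfin hXY hYP hYQ hX
        exact ⟨X', ha, hb, ⟨hb.subset, hYP, hc⟩, ⟨hb.subset, hYQ, hd⟩⟩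
      · obtain ⟨X', ha, hb, hc, hd⟩ := main_step h' hQfin hXY hYQ hYP hX.symm
        exact ⟨X', ha, hb, ⟨hb.subset, hYP, hd⟩, ⟨hb.subset, hYQ, hc⟩⟩
  · rintro ⟨h1, h2⟩ F Y
    constructor
    · exact back_dir h1 h2
    · exact back_dir (fun X => (h1 X).symm)
        (fun X Y hs ho => by
          obtain ⟨X', a, b, c, d⟩ := h2 X Y hs ho.symm
          exact ⟨X', a, b, d, c⟩)
end

section
/- For any disjunctive logic program P (possibly infinite), if P ≡ᵤ Q then UE(P) = UE(Q); i.e., uniform equivalence implies coincidence of UE-models even without finiteness assumptions. -/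
lemma mr_union {X : Interp} {P : Program} {F : Set ℕ} {Y : Interp} :
    ModelsReduct X (P ∪ Facts F) Y ↔ ModelsReduct X P Y ∧ F ⊆ X := by
  constructor
  · intro h
    refine ⟨fun r hr => h r (Or.inl hr), fun a ha => ?_⟩
    have := h ⟨{a}, ∅, ∅⟩ (Or.inr ⟨a, ha, rfl⟩) (by simp) (by simp)
    simpa using this
  · rintro ⟨h1, h2⟩ r hr hneg hpos
    rcases hr with hr | ⟨a, ha, rfl⟩
    · exact h1 r hr hneg hpos
    · exact ⟨a, by simp, h2 ha⟩

lemma models_iff_mr {Y : Interp} {P : Program} : Models Y P ↔ ModelsReduct Y P Y := by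
  constructor
  · intro h r hr hneg hpos
    exact h r hr ⟨hpos, hneg⟩
  · rintro h r hr ⟨hpos, hneg⟩
    exact h r hr hneg hpos

lemma models_iff_answer {Y : Interp} {P : Program} :
    Models Y P ↔ AnswerSet (P ∪ Facts Y) Y := by
  constructor
  · intro h
    refine ⟨mr_union.2 ⟨models_iff_mr.1 h, subset_rfl⟩, ?_⟩
    intro Z hZ hm
    exact (lt_iff_le_not_ge.1 hZ).2 (mr_union.1 hm).2
  · intro h
    exact models_iff_mr.2 fun r hr => (mr_union.1 h.1).1 r hr

lemma lemA {P Q : Program} (h : UnifEquiv P Q) {X Y : Interp}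
    (hue : UEModel P X Y) :
    ∀ Z : Interp, X ⊂ Z → Z ⊂ Y → ¬ ModelsReduct Z Q Y := by
  intro Z hXZ hZY hZQ
  have hAS : AnswerSet (P ∪ Facts Z) Y := by
    refine ⟨mr_union.2 ⟨models_iff_mr.1 hue.1.2.1, subset_of_ssubset hZY⟩, ?_⟩
    intro W hW hm
    rcases mr_union.1 hm with ⟨hWP, hZW⟩
    have hWY : W = Y :=
      hue.2 W ⟨subset_of_ssubset hW, hue.1.2.1, hWP⟩ (lt_of_lt_of_le hXZ hZW)
    exact (ne_of_lt hW) hWY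
  have hASQ := (h Z Y).1 hAS
  exact hASQ.2 Z hZY (mr_union.2 ⟨hZQ, subset_rfl⟩)

lemma lemB {P Q : Program} (h : UnifEquiv P Q) {X Y : Interp}
    (hue : UEModel P X Y) (hYQ : Models Y Q) : ModelsReduct X Q Y := by
  by_contra hX
  have hne : X ≠ Y := fun he => hX (by rw [he]; exact models_iff_mr.1 hYQ)
  have hXY : X ⊂ Y := hue.1.1.ssubset_of_ne hne
  by_cases hAS : AnswerSet (Q ∪ Facts X) Y
  · have hASP := (h X Y).2 hAS
    exact hASP.2 X hXY (mr_union.2 ⟨hue.1.2.2, subset_rfl⟩)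
  · have hm : ModelsReduct Y (Q ∪ Facts X) Y :=
      mr_union.2 ⟨models_iff_mr.1 hYQ, hue.1.1⟩
    have hex : ∃ Z, Z ⊂ Y ∧ ModelsReduct Z (Q ∪ Facts X) Y := by
      by_contra hno
      push_neg at hno
      exact hAS ⟨hm, fun Z hZ => hno Z hZ⟩
    obtain ⟨Z, hZY, hZm⟩ := hex
    rcases mr_union.1 hZm with ⟨hZQ, hXZ⟩
    have hXZ' : X ⊂ Z := hXZ.ssubset_of_ne (fun he => hX (by rw [he]; exact hZQ))
    exact lemA h hue Z hXZ' hZY hZQ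

lemma ue_of_ue {P Q : Program} (h : UnifEquiv P Q) {X Y : Interp}
    (hue : UEModel P X Y) : UEModel Q X Y := by
  have hYQ : Models Y Q := models_iff_answer.2 ((h Y Y).1 (models_iff_answer.1 hue.1.2.1))
  refine ⟨⟨hue.1.1, hYQ, lemB h hue hYQ⟩, ?_⟩
  intro X' hX' hXX'
  by_contra hne
  exact lemA h hue X' hXX' (hX'.1.ssubset_of_ne hne) hX'.2.2

theorem stmt4 (P Q : Program) (h : UnifEquiv P Q) :
    ∀ X Y : Interp, UEModel P X Y ↔ UEModel Q X Y := by
  have h' : UnifEquiv Q P := fun F Y => (h F Y).symm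
  intro X Y
  exact ⟨fun hp => ue_of_ue h hp, fun hq => ue_of_ue h' hq⟩
end

section
/- For any disjunctive logic program P and rule r, if r is a UE-consequence of P (i.e., every UE-model of P is an SE-model of r), then UE(P) = UE(P ∪ {r}). -/
/-- `r` is a UE-consequence of `P`. -/
def UECons (P : Program) (r : Rule) : Prop :=
  ∀ X Y : Interp, UEModel P X Y → SEModel {r} X Y

lemma finset_subset_chain_union {c : Set (Set ℕ)} (hc : IsChain (· ⊆ ·) c)
    (hne : c.Nonempty) (s : Finset ℕ) : ↑s ⊆ ⋃₀ c → ∃ t ∈ c, ↑s ⊆ t := by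
  classical
  induction s using Finset.induction with
  | empty => exact fun _ => ⟨hne.choose, hne.choose_spec, by simp⟩
  | @insert a s ha ih =>
    intro hs
    obtain ⟨t, ht, hst⟩ := ih (fun x hx => hs (by
      simp only [Finset.coe_insert, Set.mem_insert_iff]; right; exact hx))
    obtain ⟨u, hu, hau⟩ := hs (show a ∈ (↑(insert a s) : Set ℕ) by simp)
    rcases hc.total ht hu with h1 | h1
    · refine ⟨u, hu, ?_⟩
      intro x hx
      rcases Finset.mem_insert.mp (by exact_mod_cast hx) with rfl | hx'
      · exact hau
      · exact h1 (hst hx')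
    · refine ⟨t, ht, ?_⟩
      intro x hx
      rcases Finset.mem_insert.mp (by exact_mod_cast hx) with rfl | hx'
      · exact h1 hau
      · exact hst hx'

theorem stmt6 (P : Program) (r : Rule) (h : UECons P r) :
    ∀ X Y : Interp, UEModel P X Y ↔ UEModel (P ∪ {r}) X Y := by
  intro X Y
  constructor
  · rintro hu
    obtain ⟨⟨hXY, hMY, hRed⟩, hmax⟩ := hu
    obtain ⟨-, hMr, hRr⟩ := h X Y ⟨⟨hXY, hMY, hRed⟩, hmax⟩
    refine ⟨⟨hXY, ?_, ?_⟩, ?_⟩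
    · rintro r' (hr' | hr')
      · exact hMY r' hr'
      · exact hMr r' hr'
    · rintro r' (hr' | hr')
      · exact hRed r' hr'
      · exact hRr r' hr'
    · intro X' hX' hlt
      exact hmax X' ⟨hX'.1, fun q hq => hX'.2.1 q (Or.inl hq),
        fun q hq => hX'.2.2 q (Or.inl hq)⟩ hlt
  · rintro ⟨⟨hXY, hMY, hRed⟩, hmax⟩
    have hMYP : Models Y P := fun q hq => hMY q (Or.inl hq)
    have hRedP : ModelsReduct X P Y := fun q hq => hRed q (Or.inl hq)
    have hMYr : Rule.satisfied Y r := hMY r (Or.inr rfl)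
    refine ⟨⟨hXY, hMYP, hRedP⟩, ?_⟩
    intro X' hSE' hlt
    by_cases hr1 : ModelsReduct X' {r} Y
    · exact hmax X' ⟨hSE'.1, hMY, by
        rintro q (hq | hq)
        · exact hSE'.2.2 q hq
        · exact hr1 q hq⟩ hlt
    · exfalso
      simp only [ModelsReduct, Set.mem_singleton_iff, forall_eq, not_forall] at hr1
      obtain ⟨hneg, hpos, hhead⟩ := hr1
      push_neg at hhead
      -- Zorn argument
      set S : Set (Set ℕ) := {Z | X' ⊆ Z ∧ SEModel P Z Y ∧ ∀ a ∈ r.head, a ∉ Z} with hS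
      obtain ⟨m, hX'm, hmS, hmmax⟩ : ∃ m, X' ⊆ m ∧ Maximal (· ∈ S) m := by
        apply zorn_subset_nonempty S ?_ X' ⟨Set.Subset.rfl, hSE', hhead⟩
        intro c hcS hchain hcne
        refine ⟨⋃₀ c, ⟨?_, ⟨?_, hMYP, ?_⟩, ?_⟩, fun s hs => Set.subset_sUnion_of_mem hs⟩
        · obtain ⟨t, ht⟩ := hcne
          exact (hcS ht).1.trans (Set.subset_sUnion_of_mem ht)
        · intro x hx
          obtain ⟨t, ht, hxt⟩ := hx
          exact (hcS ht).2.1.1 hxt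
        · intro q hq hqneg hqpos
          obtain ⟨t, ht, hqt⟩ := finset_subset_chain_union hchain hcne q.pos hqpos
          obtain ⟨a, haq, hat⟩ := (hcS ht).2.1.2.2 q hq hqneg hqt
          exact ⟨a, haq, t, ht, hat⟩
        · rintro a ha ⟨t, ht, hat⟩
          exact (hcS ht).2.2 a ha hat
      obtain ⟨hX'm2, ⟨hmY, -, hmRed⟩, hmhead⟩ := hmS
      -- m ≠ Y
      obtain ⟨a, har, haY⟩ := hMYr ⟨hpos.trans hSE'.1, hneg⟩
      have hmne : m ≠ Y := fun he => hmhead a har (he ▸ haY)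
      -- m is a UE-model of P
      have hUE : UEModel P m Y := by
        refine ⟨⟨hmY, hMYP, hmRed⟩, ?_⟩
        intro Z hZ hmZ
        by_cases hh : ∃ b ∈ r.head, b ∈ Z
        · refine hmax Z ⟨hZ.1, hMY, ?_⟩ (lt_of_le_of_lt (hlt.le.trans hX'm2) hmZ)
          rintro q (hq | hq)
          · exact hZ.2.2 q hq
          · rcases hq
            exact fun _ _ => hh
        · push_neg at hh
          exact absurd (hmmax ⟨hX'm2.trans hmZ.le, hZ, hh⟩ hmZ.le) hmZ.not_ge
      obtain ⟨b, hbr, hbm⟩ := (h m Y hUE).2.2 r rfl hneg (hpos.trans hX'm2)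
      exact hmhead b hbr hbm
end

section
/- For any disjunctive logic program P, the following are equivalent: (i) for every rule r, P ⊨ᵤ r iff P ⊨ r (classical consequence); (ii) for every UE-model (X,Y) of P, X is a classical model of P. -/
/-- `r` is a classical consequence of `P`. -/
def ClassCons (P : Program) (r : Rule) : Prop :=
  ∀ Y : Interp, Models Y P → Rule.satisfied Y r

theorem stmt8 (P : Program) :
    (∀ r : Rule, UECons P r ↔ ClassCons P r) ↔
      (∀ X Y : Interp, UEModel P X Y → Models X P) := by
  constructor
  · intro h X Y hUE r hr
    rintro ⟨hpos, hneg⟩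
    by_contra hno
    push_neg at hno
    set r' : Rule := ⟨r.head ∪ r.neg, r.pos, ∅⟩ with hr'
    have hclass : ClassCons P r' := by
      intro Z hZ
      rintro ⟨hp, -⟩
      by_cases hn : ∃ a ∈ r.neg, a ∈ Z
      · obtain ⟨a, ha, haZ⟩ := hn
        exact ⟨a, Finset.mem_union_right _ ha, haZ⟩
      · push_neg at hn
        obtain ⟨a, ha, haZ⟩ := hZ r hr ⟨hp, hn⟩
        exact ⟨a, Finset.mem_union_left _ ha, haZ⟩
    have hue : UECons P r' := (h r').mpr hclass
    have hse := hue X Y hUE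
    obtain ⟨a, ha, haX⟩ := hse.2.2 r' rfl (by simp [hr']) hpos
    rcases Finset.mem_union.mp ha with h1 | h1
    · exact hno a h1 haX
    · exact hneg a h1 haX
  · intro h r
    constructor
    · intro hue Y hY
      have hYY : UEModel P Y Y := by
        refine ⟨⟨subset_rfl, hY, ?_⟩, ?_⟩
        · intro s hs hn hp
          exact hY s hs ⟨hp, hn⟩
        · intro X' hX' hlt
          exact absurd hX'.1 hlt.2
      have hse := hue Y Y hYY
      intro hb
      obtain ⟨a, ha, haY⟩ := hse.2.1 r rfl ⟨hb.1, hb.2⟩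
      exact ⟨a, ha, haY⟩
    · intro hc X Y hUE
      have hXP : Models X P := h X Y hUE
      have hYP : Models Y P := hUE.1.2.1
      refine ⟨hUE.1.1, ?_, ?_⟩
      · intro s hs
        simp only [Set.mem_singleton_iff] at hs
        subst hs
        exact hc Y hYP
      · intro s hs hn hp
        simp only [Set.mem_singleton_iff] at hs
        subst hs
        have hnX : ∀ a ∈ s.neg, a ∉ X := fun a ha haX => hn a ha (hUE.1.1 haX)
        exact hc X hXP ⟨hp, hnX⟩
end

section
/- For programs P, Q and a set of atoms A, the following are equivalent: (1) there is a program R over A with SM(P ∪ R) ⊄ SM(Q ∪ R); (2) there is a unary program U over A (rules of form a ← or a ← b with a, b ∈ A) with SM(P ∪ U) ⊄ SM(Q ∪ U); (3) there exists an interpretation Y such that (a) Y ⊨ P, (b) for each Y' ⊂ Y with Y' ∩ A = Y ∩ A, Y' ⊭ P^Y, and (c) if Y ⊨ Q then there exists X ⊂ Y with X ⊨ Q^Y and for each X' ⊂ Y with X' ∩ A = X ∩ A, X' ⊭ P^Y. -/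
/-!
A program `R` over `A` cannot tell apart two reduct models that agree on `A`. So if `Y` is an
answer set of `P ∪ R` but not of `Q ∪ R`, then `Y` is `A`-minimal for `P^Y`, and a model `X ⊂ Y`
of `(Q ∪ R)^Y` witnessing non-minimality has no `A`-equivalent counterpart modelling `P^Y`.
Conversely, from such `Y` and `X` (take `X = Y` when `Y ⊭ Q`) the unary program with facts
`X ∩ A` and all rules `a ← b` for `a, b ∈ (Y ∩ A) \ X` separates `P` from `Q`: a model `Z ⊂ Y` of
its reduct contains `X ∩ A` and, on `A`, either all of `Y ∩ A` or nothing more than `X ∩ A`.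
-/

def Clique (S : Set ℕ) : Program := { r | ∃ a ∈ S, ∃ b ∈ S, r = ⟨{a}, {b}, ∅⟩ }

def IsRelCounterexample (A : Set ℕ) (P Q : Program) (Y : Interp) : Prop :=
  Models Y P ∧
    (∀ Y' : Interp, Y' ⊂ Y → Y' ∩ A = Y ∩ A → ¬ ModelsReduct Y' P Y) ∧
    (Models Y Q → ∃ X : Interp, X ⊂ Y ∧ ModelsReduct X Q Y ∧
      ∀ X' : Interp, X' ⊂ Y → X' ∩ A = X ∩ A → ¬ ModelsReduct X' P Y)

section Reduct

variable {X Y : Interp} {P R : Program}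

theorem models_iff_modelsReduct_self : Models Y P ↔ ModelsReduct Y P Y :=
  ⟨fun h r hr hneg hpos => h r hr ⟨hpos, hneg⟩, fun h r hr ⟨hpos, hneg⟩ => h r hr hneg hpos⟩

theorem modelsReduct_union : ModelsReduct X (P ∪ R) Y ↔ ModelsReduct X P Y ∧ ModelsReduct X R Y :=
  ⟨fun h => ⟨fun r hr => h r (Or.inl hr), fun r hr => h r (Or.inr hr)⟩,
    fun ⟨hP, hR⟩ r hr => hr.elim (hP r) (hR r)⟩

theorem modelsReduct_facts {F : Set ℕ} : ModelsReduct X (Facts F) Y ↔ F ⊆ X := by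
  constructor
  · intro h a ha
    obtain ⟨c, hc, hcX⟩ := h _ ⟨a, ha, rfl⟩ (by simp) (by simp)
    rwa [Finset.mem_singleton.mp hc] at hcX
  · rintro h _ ⟨a, ha, rfl⟩ - -
    exact ⟨a, Finset.mem_singleton_self a, h ha⟩

theorem modelsReduct_clique {S : Set ℕ} :
    ModelsReduct X (Clique S) Y ↔ ∀ b ∈ S, b ∈ X → S ⊆ X := by
  constructor
  · intro h b hb hbX a ha
    obtain ⟨c, hc, hcX⟩ := h _ ⟨a, ha, b, hb, rfl⟩ (by simp) (by simpa using hbX)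
    rwa [Finset.mem_singleton.mp hc] at hcX
  · rintro h _ ⟨a, ha, b, hb, rfl⟩ - hpos
    exact ⟨a, Finset.mem_singleton_self a, h b hb (hpos (by simp)) ha⟩

theorem ModelsReduct.of_inter_eq {A : Set ℕ} {X' : Interp} (hR : ProgramOver A R)
    (hA : X' ∩ A = X ∩ A) (h : ModelsReduct X R Y) : ModelsReduct X' R Y := by
  have hmem : ∀ a ∈ A, a ∈ X' ↔ a ∈ X := fun a ha => by
    simpa [ha] using Set.ext_iff.mp hA a
  intro r hr hneg hpos
  have hatoms : ∀ a, a ∈ r.head ∨ a ∈ r.pos → a ∈ A := fun a ha =>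
    hR r hr (by simp only [Rule.atoms, Finset.coe_union, Set.mem_union, Finset.mem_coe]; tauto)
  obtain ⟨a, ha, haX⟩ := h r hr hneg fun b hb =>
    (hmem b (hatoms b (Or.inr hb))).mp (hpos hb)
  exact ⟨a, ha, (hmem a (hatoms a (Or.inl ha))).mpr haX⟩

end Reduct

theorem programOver_facts {A F : Set ℕ} (hF : F ⊆ A) : ProgramOver A (Facts F) := by
  rintro _ ⟨a, ha, rfl⟩
  simpa [Rule.atoms] using hF ha

theorem programOver_clique {A S : Set ℕ} (hS : S ⊆ A) : ProgramOver A (Clique S) := by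
  rintro _ ⟨a, ha, b, hb, rfl⟩
  simpa [Rule.atoms, Set.insert_subset_iff] using ⟨hS ha, hS hb⟩

theorem unary_of_mem_facts {F : Set ℕ} {r : Rule} (hr : r ∈ Facts F) : Unary r := by
  obtain ⟨a, -, rfl⟩ := hr
  simp [Unary]

theorem unary_of_mem_clique {S : Set ℕ} {r : Rule} (hr : r ∈ Clique S) : Unary r := by
  obtain ⟨a, -, b, -, rfl⟩ := hr
  simp [Unary]

theorem isRelCounterexample_of_answerSet {A : Set ℕ} {P Q R : Program} (hR : ProgramOver A R)
    {Y : Interp} (hP : AnswerSet (P ∪ R) Y) (hQ : ¬ AnswerSet (Q ∪ R) Y) :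
    IsRelCounterexample A P Q Y := by
  obtain ⟨hY, hYmin⟩ := hP
  obtain ⟨hYP, hYR⟩ := modelsReduct_union.mp hY
  have hminP : ∀ X X', X' ⊂ Y → X' ∩ A = X ∩ A → ModelsReduct X R Y →
      ¬ ModelsReduct X' P Y := fun X X' hX' hA hXR hX'P =>
    hYmin X' hX' (modelsReduct_union.mpr ⟨hX'P, hXR.of_inter_eq hR hA⟩)
  refine ⟨models_iff_modelsReduct_self.mpr hYP, fun Y' hY' hA => hminP Y Y' hY' hA hYR,
    fun hYQ => ?_⟩
  have hQR : ModelsReduct Y (Q ∪ R) Y :=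
    modelsReduct_union.mpr ⟨models_iff_modelsReduct_self.mp hYQ, hYR⟩
  obtain ⟨X, hXY, hXQR⟩ : ∃ X ⊂ Y, ModelsReduct X (Q ∪ R) Y := by
    by_contra! h
    exact hQ ⟨hQR, h⟩
  obtain ⟨hXQ, hXR⟩ := modelsReduct_union.mp hXQR
  exact ⟨X, hXY, hXQ, fun X' hX' hA => hminP X X' hX' hA hXR⟩

section Separating

variable {A : Set ℕ} {P : Program} {X Y : Interp}

theorem answerSet_union_facts_union_clique (hP : Models Y P) (hXY : X ⊆ Y)
    (hminY : ∀ Y' : Interp, Y' ⊂ Y → Y' ∩ A = Y ∩ A → ¬ ModelsReduct Y' P Y)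
    (hminX : ∀ X' : Interp, X' ⊂ Y → X' ∩ A = X ∩ A → ¬ ModelsReduct X' P Y) :
    AnswerSet (P ∪ (Facts (X ∩ A) ∪ Clique ((Y ∩ A) \ X))) Y := by
  simp only [AnswerSet, modelsReduct_union, modelsReduct_facts, modelsReduct_clique]
  refine ⟨⟨models_iff_modelsReduct_self.mp hP, fun a ha => hXY ha.1,
    fun _ _ _ _ ha => ha.1.1⟩, ?_⟩
  rintro Z hZY ⟨hZP, hXZ, hZclique⟩
  by_cases hb : ∃ b ∈ (Y ∩ A) \ X, b ∈ Z
  · obtain ⟨b, hb, hbZ⟩ := hb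
    refine hminY Z hZY (subset_antisymm (Set.inter_subset_inter_left A hZY.1) ?_) hZP
    intro a ha
    by_cases haX : a ∈ X
    · exact ⟨hXZ ⟨haX, ha.2⟩, ha.2⟩
    · exact ⟨hZclique b hb hbZ ⟨ha, haX⟩, ha.2⟩
  · push Not at hb
    refine hminX Z hZY (subset_antisymm ?_ fun a ha => ⟨hXZ ha, ha.2⟩) hZP
    intro a ⟨haZ, haA⟩
    by_contra haX
    exact hb a ⟨⟨hZY.1 haZ, haA⟩, fun h => haX ⟨h, haA⟩⟩ haZ

theorem exists_unary_of_isRelCounterexample {Q : Program} (h : IsRelCounterexample A P Q Y) :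
    ∃ U : Program, ProgramOver A U ∧ (∀ r ∈ U, Unary r) ∧
      AnswerSet (P ∪ U) Y ∧ ¬ AnswerSet (Q ∪ U) Y := by
  obtain ⟨hP, hminY, hQ⟩ := h
  have hU : ∀ X : Interp, ProgramOver A (Facts (X ∩ A) ∪ Clique ((Y ∩ A) \ X)) ∧
      ∀ r ∈ Facts (X ∩ A) ∪ Clique ((Y ∩ A) \ X), Unary r := fun X =>
    ⟨fun r hr => hr.elim (programOver_facts Set.inter_subset_right r)
      (programOver_clique (Set.sdiff_subset.trans Set.inter_subset_right) r),
    fun r hr => hr.elim unary_of_mem_facts unary_of_mem_clique⟩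
  by_cases hYQ : Models Y Q
  · obtain ⟨X, hXY, hXQ, hminX⟩ := hQ hYQ
    refine ⟨_, (hU X).1, (hU X).2,
      answerSet_union_facts_union_clique hP hXY.1 hminY hminX, fun hQU => ?_⟩
    refine hQU.2 X hXY ?_
    simp only [modelsReduct_union, modelsReduct_facts, modelsReduct_clique]
    exact ⟨hXQ, Set.inter_subset_left, fun b hb hbX => absurd hbX hb.2⟩
  · refine ⟨_, (hU Y).1, (hU Y).2,
      answerSet_union_facts_union_clique hP subset_rfl hminY hminY, fun hQU => ?_⟩
    exact hYQ (models_iff_modelsReduct_self.mpr (modelsReduct_union.mp hQU.1).1)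

end Separating

theorem stmt9 (P Q : Program) (A : Set ℕ) :
    ((∃ R : Program, ProgramOver A R ∧
        ∃ Y : Interp, AnswerSet (P ∪ R) Y ∧ ¬ AnswerSet (Q ∪ R) Y) ↔
      (∃ Y : Interp, Models Y P ∧
        (∀ Y' : Interp, Y' ⊂ Y → Y' ∩ A = Y ∩ A → ¬ ModelsReduct Y' P Y) ∧
        (Models Y Q → ∃ X : Interp, X ⊂ Y ∧ ModelsReduct X Q Y ∧
          ∀ X' : Interp, X' ⊂ Y → X' ∩ A = X ∩ A → ¬ ModelsReduct X' P Y))) ∧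
    ((∃ U : Program, ProgramOver A U ∧ (∀ r ∈ U, Unary r) ∧
        ∃ Y : Interp, AnswerSet (P ∪ U) Y ∧ ¬ AnswerSet (Q ∪ U) Y) ↔
      (∃ Y : Interp, Models Y P ∧
        (∀ Y' : Interp, Y' ⊂ Y → Y' ∩ A = Y ∩ A → ¬ ModelsReduct Y' P Y) ∧
        (Models Y Q → ∃ X : Interp, X ⊂ Y ∧ ModelsReduct X Q Y ∧
          ∀ X' : Interp, X' ⊂ Y → X' ∩ A = X ∩ A → ¬ ModelsReduct X' P Y))) := by
  have h13 : ∀ R, ProgramOver A R → (∃ Y, AnswerSet (P ∪ R) Y ∧ ¬ AnswerSet (Q ∪ R) Y) →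
      ∃ Y, IsRelCounterexample A P Q Y := fun R hR ⟨Y, hP, hQ⟩ =>
    ⟨Y, isRelCounterexample_of_answerSet hR hP hQ⟩
  have h32 : (∃ Y, IsRelCounterexample A P Q Y) → ∃ U : Program, ProgramOver A U ∧
      (∀ r ∈ U, Unary r) ∧ ∃ Y, AnswerSet (P ∪ U) Y ∧ ¬ AnswerSet (Q ∪ U) Y := by
    rintro ⟨Y, hY⟩
    obtain ⟨U, hUA, hUunary, hP, hQ⟩ := exists_unary_of_isRelCounterexample hY
    exact ⟨U, hUA, hUunary, Y, hP, hQ⟩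
  refine ⟨⟨fun ⟨R, hR, hY⟩ => h13 R hR hY, fun h => ?_⟩,
    ⟨fun ⟨U, hU, _, hY⟩ => h13 U hU hY, h32⟩⟩
  obtain ⟨U, hU, -, hY⟩ := h32 h
  exact ⟨U, hU, hY⟩
end

section
/- For positive disjunctive logic programs P and Q, P and Q are uniformly equivalent if and only if P and Q have the same classical models; similarly for strong equivalence. -/
lemma pos_reduct {P : Program} (hP : Positive P) (X Y : Interp) :
    ModelsReduct X P Y ↔ Models X P := by
  constructor
  · intro h r hr
    intro ⟨hpos, _⟩
    exact h r hr (by simp [hP r hr]) hpos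
  · intro h r hr _ hpos
    exact h r hr ⟨hpos, by simp [hP r hr]⟩

lemma union_reduct (P R : Program) (X Y : Interp) :
    ModelsReduct X (P ∪ R) Y ↔ ModelsReduct X P Y ∧ ModelsReduct X R Y := by
  constructor
  · exact fun h => ⟨fun r hr => h r (Or.inl hr), fun r hr => h r (Or.inr hr)⟩
  · rintro ⟨h1, h2⟩ r (hr | hr)
    · exact h1 r hr
    · exact h2 r hr

lemma facts_reduct (F : Set ℕ) (X Y : Interp) :
    ModelsReduct X (Facts F) Y ↔ F ⊆ X := by
  constructor
  · intro h a ha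
    have := h ⟨{a}, ∅, ∅⟩ ⟨a, ha, rfl⟩ (by simp) (by simp)
    simpa using this
  · rintro h r ⟨a, ha, rfl⟩ _ _
    exact ⟨a, by simp, h ha⟩

lemma unif_models {P Q : Program} (hP : Positive P) (hQ : Positive Q)
    (h : UnifEquiv P Q) (Y : Interp) (hM : Models Y P) : Models Y Q := by
  have hAS : AnswerSet (P ∪ Facts Y) Y := by
    constructor
    · rw [union_reduct]
      exact ⟨(pos_reduct hP Y Y).2 hM, (facts_reduct Y Y Y).2 subset_rfl⟩
    · intro Z hZ hc
      rw [union_reduct, facts_reduct] at hc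
      exact hZ.2 hc.2
  have := ((h Y Y).1 hAS).1
  rw [union_reduct] at this
  exact (pos_reduct hQ Y Y).1 this.1

theorem stmt16 (P Q : Program) (hP : Positive P) (hQ : Positive Q) :
    (UnifEquiv P Q ↔ ∀ Y : Interp, Models Y P ↔ Models Y Q) ∧
    (StrongEquiv P Q ↔ ∀ Y : Interp, Models Y P ↔ Models Y Q) := by
  have hSM : (∀ Y : Interp, Models Y P ↔ Models Y Q) → StrongEquiv P Q := by
    intro hsm R Y
    have key : ∀ Z : Interp, ModelsReduct Z (P ∪ R) Y ↔ ModelsReduct Z (Q ∪ R) Y := by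
      intro Z
      rw [union_reduct, union_reduct, pos_reduct hP, pos_reduct hQ, hsm Z]
    constructor
    · rintro ⟨h1, h2⟩
      exact ⟨(key Y).1 h1, fun Z hZ hc => h2 Z hZ ((key Z).2 hc)⟩
    · rintro ⟨h1, h2⟩
      exact ⟨(key Y).2 h1, fun Z hZ hc => h2 Z hZ ((key Z).1 hc)⟩
  have hUS : UnifEquiv P Q → ∀ Y : Interp, Models Y P ↔ Models Y Q := by
    intro h Y
    exact ⟨unif_models hP hQ h Y,
      unif_models hQ hP (fun F Y => (h F Y).symm) Y⟩
  refine ⟨⟨hUS, fun hsm F Y => hSM hsm (Facts F) Y⟩, ?_, hSM⟩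
  intro hse
  exact hUS (fun F Y => hse (Facts F) Y)
end

section
/- For any disjunctive rule r (|H(r)| ≥ 2), the set difference SE(r→) \ SE(r) equals S_r = {(X,Y) | X ⊆ Y, X ⊨ B+(r), Y ∩ B-(r) = ∅, |H(r) ∩ Y| ≥ 2, H(r) ∩ X = ∅}; moreover SE(r) ⊆ SE(r→). -/
/-- The set `S_r` of SE-interpretations distinguishing `r` from its shift. -/
def Sr (r : Rule) : Set (Interp × Interp) :=
  { p | p.1 ⊆ p.2 ∧ ↑r.pos ⊆ p.1 ∧ (∀ a ∈ r.neg, a ∉ p.2) ∧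
        (∃ a ∈ r.head, ∃ b ∈ r.head, a ≠ b ∧ a ∈ p.2 ∧ b ∈ p.2) ∧
        (∀ a ∈ r.head, a ∉ p.1) }

theorem stmt19 (r : Rule) (h : 2 ≤ r.head.card) :
    SEset r.shift \ SEset {r} = Sr r ∧ SEset {r} ⊆ SEset r.shift := by
  have hne : r.head ≠ ∅ := by
    intro he; simp [he] at h
  have hshift : r.shift = { r' | ∃ a ∈ r.head, r' = ⟨{a}, r.pos, r.neg ∪ (r.head.erase a)⟩ } := by
    simp [Rule.shift, hne]
  have hanon : ∃ a, a ∈ r.head := by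
    rcases Finset.card_pos.mp (Nat.lt_of_lt_of_le Nat.zero_lt_two h) with ⟨a, ha⟩; exact ⟨a, ha⟩
  constructor
  · ext ⟨X, Y⟩
    simp only [Set.mem_diff, SEset, Set.mem_setOf_eq, Sr]
    constructor
    · rintro ⟨⟨hXY, hM, hR⟩, hnot⟩
      -- extract per-atom facts
      have hMa : ∀ a ∈ r.head, Rule.satisfied Y ⟨{a}, r.pos, r.neg ∪ (r.head.erase a)⟩ := by
        intro a ha
        exact hM ⟨{a}, r.pos, r.neg ∪ (r.head.erase a)⟩ (by rw [hshift]; exact ⟨a, ha, rfl⟩)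
      have hRa : ∀ a ∈ r.head, (∀ b ∈ r.neg ∪ r.head.erase a, b ∉ Y) → (↑r.pos ⊆ X) → a ∈ X := by
        intro a ha hb hp
        have := hR ⟨{a}, r.pos, r.neg ∪ (r.head.erase a)⟩ (by rw [hshift]; exact ⟨a, ha, rfl⟩) hb hp
        simpa using this
      -- Y satisfies r
      have hYr : Rule.satisfied Y r := by
        rintro ⟨hpos, hnegY⟩
        by_contra hc
        push_neg at hc
        obtain ⟨a, ha⟩ := hanon
        have := hMa a ha ⟨hpos, ?_⟩
        · simp only [Finset.mem_singleton] at this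
          obtain ⟨c, hc1, hc2⟩ := this
          exact hc a ha (hc1 ▸ hc2)
        · intro b hb
          rcases Finset.mem_union.mp hb with hb | hb
          · exact hnegY b hb
          · exact hc b (Finset.mem_of_mem_erase hb)
      -- so the failure is in the reduct
      have hMr : Models Y {r} := by
        intro r' hr'; rw [Set.mem_singleton_iff] at hr'; subst hr'; exact hYr
      have hnR : ¬ ModelsReduct X {r} Y := by
        intro hc; exact hnot ⟨hXY, hMr, hc⟩
      simp only [ModelsReduct, Set.mem_singleton_iff, forall_eq] at hnR
      push_neg at hnR
      obtain ⟨hnegY, hposX, hheadX⟩ := hnR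
      refine ⟨hXY, hposX, hnegY, ?_, hheadX⟩
      -- show two distinct head atoms in Y
      by_contra hc
      push_neg at hc
      -- hc : ∀ a ∈ head, ∀ b ∈ head, a ≠ b → a ∈ Y → b ∉ Y
      have key : ∃ w ∈ r.head, ∀ b ∈ r.head, b ∈ Y → b = w := by
        by_cases hex : ∃ c ∈ r.head, c ∈ Y
        · obtain ⟨c, hc1, hc2⟩ := hex
          refine ⟨c, hc1, fun b hb hbY => ?_⟩
          by_contra hbc
          exact hc b hb c hc1 hbc hbY hc2
        · push_neg at hex
          obtain ⟨a, ha⟩ := hanon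
          exact ⟨a, ha, fun b hb hbY => absurd hbY (hex b hb)⟩
      obtain ⟨w, hw, hwu⟩ := key
      have : w ∈ X := by
        apply hRa w hw ?_ hposX
        intro b hb
        rcases Finset.mem_union.mp hb with hb | hb
        · exact hnegY b hb
        · intro hbY
          exact (Finset.ne_of_mem_erase hb) (hwu b (Finset.mem_of_mem_erase hb) hbY)
      exact hheadX w hw this
    · rintro ⟨hXY, hposX, hnegY, ⟨a, ha, b, hb, hab, haY, hbY⟩, hheadX⟩
      constructor
      · refine ⟨hXY, ?_, ?_⟩
        · intro r' hr'
          rw [hshift] at hr'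
          obtain ⟨c, hc, rfl⟩ := hr'
          rintro ⟨-, hn⟩
          exfalso
          rcases eq_or_ne a c with rfl | hac
          · exact hn b (Finset.mem_union_right _ (Finset.mem_erase.mpr ⟨fun e => hab e.symm, hb⟩)) hbY
          · exact hn a (Finset.mem_union_right _ (Finset.mem_erase.mpr ⟨hac, ha⟩)) haY
        · intro r' hr'
          rw [hshift] at hr'
          obtain ⟨c, hc, rfl⟩ := hr'
          intro hn _
          exfalso
          rcases eq_or_ne a c with rfl | hac
          · exact hn b (Finset.mem_union_right _ (Finset.mem_erase.mpr ⟨fun e => hab e.symm, hb⟩)) hbY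
          · exact hn a (Finset.mem_union_right _ (Finset.mem_erase.mpr ⟨hac, ha⟩)) haY
      · rintro ⟨-, -, hR⟩
        have := hR r (Set.mem_singleton r) hnegY hposX
        obtain ⟨c, hc1, hc2⟩ := this
        exact hheadX c hc1 hc2
  · rintro ⟨X, Y⟩ ⟨hXY, hM, hR⟩
    have hYr : Rule.satisfied Y r := hM r (Set.mem_singleton r)
    have hRr := hR r (Set.mem_singleton r)
    refine ⟨hXY, ?_, ?_⟩
    · intro r' hr'
      rw [hshift] at hr'
      obtain ⟨c, hc, rfl⟩ := hr'
      rintro ⟨hpos, hn⟩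
      have hnegY : ∀ x ∈ r.neg, x ∉ Y := fun x hx => hn x (Finset.mem_union_left _ hx)
      obtain ⟨d, hd1, hd2⟩ := hYr ⟨hpos, hnegY⟩
      refine ⟨c, Finset.mem_singleton_self c, ?_⟩
      rcases eq_or_ne d c with rfl | hdc
      · exact hd2
      · exact absurd hd2 (hn d (Finset.mem_union_right _ (Finset.mem_erase.mpr ⟨hdc, hd1⟩)))
    · intro r' hr'
      rw [hshift] at hr'
      obtain ⟨c, hc, rfl⟩ := hr'
      intro hn hpos
      have hnegY : ∀ x ∈ r.neg, x ∉ Y := fun x hx => hn x (Finset.mem_union_left _ hx)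
      obtain ⟨d, hd1, hd2⟩ := hRr hnegY hpos
      refine ⟨c, Finset.mem_singleton_self c, ?_⟩
      rcases eq_or_ne d c with rfl | hdc
      · exact hd2
      · exact absurd (hXY hd2) (hn d (Finset.mem_union_right _ (Finset.mem_erase.mpr ⟨hdc, hd1⟩)))
end
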